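/- Let H ⊂ 𝓗 be a standard subspace with Tomita operator S_H, and T ∈ B(𝓗⊗𝓗) an S_H-crossable operator. Then T is S_H-crossing symmetric (Cross_{S_H}(T) = T*) if and only if for every ψ₁, ψ₂ ∈ 𝓗 the operator V_{ψ₁,ψ₂}(T) := ½(a_L(ψ₁) T a_R*(ψ₂) + a_L(ψ₂) T a_R*(ψ₁)) maps H into H. -/

import Mathlib

noncomputable section
open scoped InnerProductSpace ComplexConjugate

variable {H K : Type*}

/-- A realization of the Hilbert space tensor square of `H` on a Hilbert space `K`. -/
structure TensorSquare (H K : Type*) [NormedAddCommGroup H] [InnerProductSpace ℂ H]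
    [NormedAddCommGroup K] [InnerProductSpace ℂ K] : Type _ where
  tmul : H → H → K
  tmul_add_left : ∀ a a' b, tmul (a + a') b = tmul a b + tmul a' b
  tmul_add_right : ∀ a b b', tmul a (b + b') = tmul a b + tmul a b'
  tmul_smul_left : ∀ (c : ℂ) a b, tmul (c • a) b = c • tmul a b
  tmul_smul_right : ∀ (c : ℂ) a b, tmul a (c • b) = c • tmul a b
  inner_tmul : ∀ a b c d, ⟪tmul a b, tmul c d⟫_ℂ = ⟪a, c⟫_ℂ * ⟪b, d⟫_ℂ
  dense_span : Dense (↑(Submodule.span ℂ (Set.range fun p : H × H => tmul p.1 p.2)) : Set K)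

/-- A densely defined closed antilinear involution `S` on `H`, together with its adjoint `S*`. -/
structure AntiInvolution (H : Type*) [NormedAddCommGroup H] [InnerProductSpace ℂ H] : Type _ where
  dom : Submodule ℂ H
  toFun : H → H
  dense_dom : Dense (dom : Set H)
  map_add : ∀ x ∈ dom, ∀ y ∈ dom, toFun (x + y) = toFun x + toFun y
  map_smul : ∀ (c : ℂ), ∀ x ∈ dom, toFun (c • x) = (starRingEnd ℂ c) • toFun x
  invol_mem : ∀ x ∈ dom, toFun x ∈ dom
  invol : ∀ x ∈ dom, toFun (toFun x) = x
  closed_graph : IsClosed {p : H × H | p.1 ∈ dom ∧ toFun p.1 = p.2}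
  adjDom : Submodule ℂ H
  adjFun : H → H
  dense_adjDom : Dense (adjDom : Set H)
  adj_spec : ∀ y ∈ adjDom, ∀ x ∈ dom, ⟪adjFun y, x⟫_ℂ = ⟪toFun x, y⟫_ℂ
  adj_max : ∀ y z : H, (∀ x ∈ dom, ⟪z, x⟫_ℂ = ⟪toFun x, y⟫_ℂ) → y ∈ adjDom

section
variable [NormedAddCommGroup H] [InnerProductSpace ℂ H]
  [NormedAddCommGroup K] [InnerProductSpace ℂ K]

/-- The crossing relation (unbounded `S`): `Tc = Cross_S(T)`. -/
def CrossRelU (τ : TensorSquare H K) (S : AntiInvolution H) (T Tc : K →L[ℂ] K) : Prop :=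
  ∀ φ₁ ∈ S.dom, ∀ ψ₁ ∈ S.dom, ∀ φ₂ ∈ S.adjDom, ∀ ψ₂ ∈ S.adjDom,
    ⟪τ.tmul φ₁ φ₂, Tc (τ.tmul ψ₁ ψ₂)⟫_ℂ
      = ⟪τ.tmul φ₂ (S.adjFun ψ₂), T (τ.tmul (S.toFun φ₁) ψ₁)⟫_ℂ

/-- The crossing relation for an everywhere defined (bounded) antilinear involution `S`
with adjoint `Sstar`. -/
def CrossRelB (τ : TensorSquare H K) (S Sstar : H →SL[starRingEnd ℂ] H) (T Tc : K →L[ℂ] K) :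
    Prop :=
  ∀ φ₁ φ₂ ψ₁ ψ₂ : H,
    ⟪τ.tmul φ₁ φ₂, Tc (τ.tmul ψ₁ ψ₂)⟫_ℂ = ⟪τ.tmul φ₂ (Sstar ψ₂), T (τ.tmul (S φ₁) ψ₁)⟫_ℂ

end

/-!
Write `B_{h,y}(a, b) = ⟪a ⊗ y, T (h ⊗ b)⟫`. Pairing `V_{a,b}(T) h` with `y` gives
`½ (B_{h,y}(a, b) + B_{h,y}(b, a))`, and the closed real subspace `Hr` consists of the vectors `x`
with `Im ⟪y, x⟫ = 0` for all `y` in its symplectic complement `Hr'`, which is the fixed-point set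
of `S*`. So the endomorphism property says that `B_{h,y}(a, b) + B_{h,y}(b, a)` is real for
`h ∈ Hr`, `y ∈ Hr'`; since `B_{h,y}` is sesquilinear, replacing `a` by `i a` turns this into
`B_{h,y}(b, a) = conj B_{h,y}(a, b)`, which is the crossing identity for such `h` and `y`.
Real-linearity extends it to `dom S = Hr + i Hr` and `dom S* = Hr' + i Hr'`, and by density of
these domains the crossing identity on them is the same as on all of `𝓗 × 𝓗`.
-/

lemma forall_eq_conj_iff_forall_im_add_eq_zero {E : Type*} [SMul ℂ E] {B : E → E → ℂ}
    (hl : ∀ a b, B (Complex.I • a) b = -Complex.I * B a b)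
    (hr : ∀ a b, B a (Complex.I • b) = Complex.I * B a b) :
    (∀ a b, B b a = conj (B a b)) ↔ ∀ a b, (B a b + B b a).im = 0 := by
  refine ⟨fun h a b => by simp [h a b], fun h a b => ?_⟩
  have him := h a b
  have hre := h (Complex.I • a) b
  rw [hl, hr] at hre
  simp only [Complex.add_im, Complex.mul_im, Complex.I_re, Complex.I_im, Complex.neg_re,
    Complex.neg_im] at him hre
  apply Complex.ext <;> simp only [Complex.conj_re, Complex.conj_im] <;> linarith

section

variable [NormedAddCommGroup H] [InnerProductSpace ℂ H]
  [NormedAddCommGroup K] [InnerProductSpace ℂ K]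

lemma Submodule.mem_of_forall_im_inner_eq_zero [CompleteSpace H] {Hr : Submodule ℝ H}
    (hclosed : IsClosed (Hr : Set H)) {x : H}
    (hx : ∀ y : H, (∀ h ∈ Hr, (⟪y, h⟫_ℂ).im = 0) → (⟪y, x⟫_ℂ).im = 0) : x ∈ Hr := by
  let : InnerProductSpace ℝ H := InnerProductSpace.rclikeToReal ℂ H
  have : CompleteSpace Hr := hclosed.completeSpace_coe
  rw [← Hr.orthogonal_orthogonal, Submodule.mem_orthogonal]
  intro v hv
  -- for the real inner product `re ⟪·, ·⟫`, `v ∈ Hrᗮ` says that `-i v` is in the symplectic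
  -- complement of `Hr`
  have hIv : ∀ h ∈ Hr, (⟪-Complex.I • v, h⟫_ℂ).im = 0 := by
    intro h hh
    have hre : (⟪v, h⟫_ℂ).re = 0 := by
      rw [← inner_conj_symm, Complex.conj_re]
      exact (Submodule.mem_orthogonal Hr v).mp hv h hh
    simp [inner_smul_left, hre]
  have hvx := hx _ hIv
  simp [inner_smul_left] at hvx
  exact hvx

namespace TensorSquare

variable (τ : TensorSquare H K)

lemma norm_tmul (a b : H) : ‖τ.tmul a b‖ = ‖a‖ * ‖b‖ := by
  rw [norm_eq_sqrt_re_inner (𝕜 := ℂ), τ.inner_tmul, inner_self_eq_norm_sq_to_K,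
    inner_self_eq_norm_sq_to_K, ← mul_pow, ← RCLike.ofReal_mul, ← RCLike.ofReal_pow,
    RCLike.ofReal_re, Real.sqrt_sq (by positivity)]

lemma continuous_tmul : Continuous fun p : H × H => τ.tmul p.1 p.2 :=
  ((LinearMap.mk₂ ℂ τ.tmul τ.tmul_add_left τ.tmul_smul_left τ.tmul_add_right
    τ.tmul_smul_right).mkContinuous₂ 1 fun a b => by simp [τ.norm_tmul]).continuous₂

lemma inner_apply_eq_inner_tmul {A : K →L[ℂ] H} {ψ : H}
    (hA : ∀ u v : H, A (τ.tmul u v) = ⟪ψ, u⟫_ℂ • v) (y : H) (k : K) :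
    ⟪y, A k⟫_ℂ = ⟪τ.tmul ψ y, k⟫_ℂ := by
  have h : (innerSL ℂ y).comp A = innerSL ℂ (τ.tmul ψ y) := by
    refine ContinuousLinearMap.ext_on τ.dense_span ?_
    rintro x ⟨p, rfl⟩
    simp [hA, τ.inner_tmul]
  simpa using DFunLike.congr_fun h k

lemma inner_tmul_apply_eq_conj_iff (T : K →L[ℂ] K) (h y : H) :
    (∀ a b, ⟪τ.tmul b y, T (τ.tmul h a)⟫_ℂ = conj ⟪τ.tmul a y, T (τ.tmul h b)⟫_ℂ) ↔
      ∀ a b, (⟪τ.tmul a y, T (τ.tmul h b)⟫_ℂ + ⟪τ.tmul b y, T (τ.tmul h a)⟫_ℂ).im = 0 :=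
  forall_eq_conj_iff_forall_im_add_eq_zero (B := fun a b => ⟪τ.tmul a y, T (τ.tmul h b)⟫_ℂ)
    (fun a b => by rw [τ.tmul_smul_left, inner_smul_left, Complex.conj_I])
    (fun a b => by rw [τ.tmul_smul_right, map_smul, inner_smul_right])

end TensorSquare

namespace AntiInvolution

variable (S : AntiInvolution H)

lemma adjFun_mem {y : H} (hy : y ∈ S.adjDom) : S.adjFun y ∈ S.adjDom := by
  refine S.adj_max (S.adjFun y) y fun x hx => ?_
  have h := S.adj_spec y hy _ (S.invol_mem x hx)
  rw [S.invol x hx] at h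
  rw [← inner_conj_symm (S.toFun x), h, inner_conj_symm]

lemma adjFun_adjFun {y : H} (hy : y ∈ S.adjDom) : S.adjFun (S.adjFun y) = y := by
  refine S.dense_dom.eq_of_inner_left ℂ fun x hx => ?_
  rw [S.adj_spec _ (S.adjFun_mem hy) x hx, ← inner_conj_symm,
    S.adj_spec y hy _ (S.invol_mem x hx), S.invol x hx, inner_conj_symm]

lemma adjFun_add {y y' : H} (hy : y ∈ S.adjDom) (hy' : y' ∈ S.adjDom) :
    S.adjFun (y + y') = S.adjFun y + S.adjFun y' := by
  refine S.dense_dom.eq_of_inner_left ℂ fun x hx => ?_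
  rw [S.adj_spec _ (S.adjDom.add_mem hy hy') x hx, inner_add_left,
    S.adj_spec y hy x hx, S.adj_spec y' hy' x hx, inner_add_right]

lemma adjFun_smul (c : ℂ) {y : H} (hy : y ∈ S.adjDom) :
    S.adjFun (c • y) = conj c • S.adjFun y := by
  refine S.dense_dom.eq_of_inner_left ℂ fun x hx => ?_
  rw [S.adj_spec _ (S.adjDom.smul_mem c hy) x hx, inner_smul_left, inner_smul_right,
    S.adj_spec y hy x hx, Complex.conj_conj]

lemma adjFun_sub {y y' : H} (hy : y ∈ S.adjDom) (hy' : y' ∈ S.adjDom) :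
    S.adjFun (y - y') = S.adjFun y - S.adjFun y' := by
  rw [sub_eq_add_neg, ← neg_one_smul ℂ y', S.adjFun_add hy (S.adjDom.smul_mem _ hy'),
    S.adjFun_smul _ hy', map_neg, map_one, neg_one_smul, ← sub_eq_add_neg]

lemma exists_fixed_add_I_smul_fixed {w : H} (hw : w ∈ S.adjDom) :
    ∃ y₁ ∈ S.adjDom, S.adjFun y₁ = y₁ ∧ ∃ y₂ ∈ S.adjDom, S.adjFun y₂ = y₂ ∧
      w = y₁ + Complex.I • y₂ ∧ S.adjFun w = y₁ - Complex.I • y₂ := by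
  have hw' := S.adjFun_mem hw
  have hI : Complex.I * -(2⁻¹ * Complex.I) = 2⁻¹ := by simp [Complex.ext_iff]
  refine ⟨(2⁻¹ : ℂ) • (w + S.adjFun w), S.adjDom.smul_mem _ (S.adjDom.add_mem hw hw'), ?_,
    (-(2⁻¹ * Complex.I)) • (w - S.adjFun w), S.adjDom.smul_mem _ (S.adjDom.sub_mem hw hw'), ?_,
    ?_, ?_⟩
  · rw [S.adjFun_smul _ (S.adjDom.add_mem hw hw'), S.adjFun_add hw hw', S.adjFun_adjFun hw,
      add_comm, map_inv₀, map_ofNat]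
  · rw [S.adjFun_smul _ (S.adjDom.sub_mem hw hw'), S.adjFun_sub hw hw', S.adjFun_adjFun hw,
      ← neg_sub, smul_neg, ← neg_smul, map_neg, map_mul, map_inv₀, map_ofNat, Complex.conj_I,
      mul_neg, neg_neg]
  · rw [smul_smul, hI]
    module
  · rw [smul_smul, hI]
    module

lemma inner_tmul_adjFun_eq_conj (τ : TensorSquare H K) {a b : H} {u v : K}
    (hfix : ∀ y ∈ S.adjDom, S.adjFun y = y → ⟪τ.tmul b y, u⟫_ℂ = conj ⟪τ.tmul a y, v⟫_ℂ)
    {w : H} (hw : w ∈ S.adjDom) :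
    ⟪τ.tmul b (S.adjFun w), u⟫_ℂ = conj ⟪τ.tmul a w, v⟫_ℂ := by
  obtain ⟨y₁, hy₁, hfix₁, y₂, hy₂, hfix₂, rfl, hSw⟩ := S.exists_fixed_add_I_smul_fixed hw
  rw [hSw, sub_eq_add_neg, ← neg_smul, τ.tmul_add_right, τ.tmul_add_right, τ.tmul_smul_right,
    τ.tmul_smul_right, inner_add_left, inner_add_left, inner_smul_left, inner_smul_left,
    hfix y₁ hy₁ hfix₁, hfix y₂ hy₂ hfix₂, _root_.map_add, map_mul, Complex.conj_conj, map_neg,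
    Complex.conj_I]
  ring

end AntiInvolution

lemma crossRelU_adjoint_iff [CompleteSpace K] (τ : TensorSquare H K) (S : AntiInvolution H)
    (T : K →L[ℂ] K) :
    CrossRelU τ S T (ContinuousLinearMap.adjoint T) ↔
      ∀ φ ∈ S.dom, ∀ w ∈ S.adjDom, ∀ a b : H,
        ⟪τ.tmul b (S.adjFun w), T (τ.tmul (S.toFun φ) a)⟫_ℂ =
          conj ⟪τ.tmul a w, T (τ.tmul φ b)⟫_ℂ := by
  simp only [CrossRelU, ContinuousLinearMap.adjoint_inner_right, ← inner_conj_symm (T _)]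
  refine ⟨fun hcross φ hφ w hw => ?_, fun h φ hφ a _ b _ w hw => (h φ hφ w hw a b).symm⟩
  have := τ.continuous_tmul
  have hcross_all := Continuous.ext_on (S.dense_dom.prod S.dense_adjDom) (by fun_prop)
    (by fun_prop) fun p hp => (hcross φ hφ p.1 hp.1 p.2 hp.2 w hw).symm
  exact fun a b => congrFun hcross_all (a, b)

structure IsTomitaOperator (Hr : Submodule ℝ H) (S : AntiInvolution H) : Prop where
  mem_dom_iff : ∀ x : H, x ∈ S.dom ↔ ∃ h₁ ∈ Hr, ∃ h₂ ∈ Hr, x = h₁ + Complex.I • h₂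
  toFun_add_I_smul :
    ∀ h₁ ∈ Hr, ∀ h₂ ∈ Hr, S.toFun (h₁ + Complex.I • h₂) = h₁ - Complex.I • h₂

namespace IsTomitaOperator

variable {Hr : Submodule ℝ H} {S : AntiInvolution H}

lemma mem_dom (hS : IsTomitaOperator Hr S) {h : H} (hh : h ∈ Hr) : h ∈ S.dom :=
  (hS.mem_dom_iff h).mpr ⟨h, hh, 0, Hr.zero_mem, by simp⟩

lemma toFun_eq_self (hS : IsTomitaOperator Hr S) {h : H} (hh : h ∈ Hr) : S.toFun h = h := by
  simpa using hS.toFun_add_I_smul h hh 0 Hr.zero_mem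

lemma adjFun_eq_self_iff (hS : IsTomitaOperator Hr S) {y : H} :
    (y ∈ S.adjDom ∧ S.adjFun y = y) ↔ ∀ h ∈ Hr, (⟪y, h⟫_ℂ).im = 0 := by
  constructor
  · rintro ⟨hy, hfix⟩ h hh
    have h1 := S.adj_spec y hy h (hS.mem_dom hh)
    rw [hfix, hS.toFun_eq_self hh] at h1
    exact Complex.conj_eq_iff_im.mp ((inner_conj_symm h y).trans h1.symm)
  · intro hy
    have hreal : ∀ h ∈ Hr, ⟪h, y⟫_ℂ = ⟪y, h⟫_ℂ := fun h hh => by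
      rw [← inner_conj_symm]
      exact Complex.conj_eq_iff_im.mpr (hy h hh)
    have hadj : ∀ x ∈ S.dom, ⟪y, x⟫_ℂ = ⟪S.toFun x, y⟫_ℂ := by
      intro x hx
      obtain ⟨h₁, hh₁, h₂, hh₂, rfl⟩ := (hS.mem_dom_iff x).mp hx
      rw [hS.toFun_add_I_smul h₁ hh₁ h₂ hh₂, inner_add_right, inner_smul_right, inner_sub_left,
        inner_smul_left, hreal h₁ hh₁, hreal h₂ hh₂, Complex.conj_I]
      ring
    have hmem : y ∈ S.adjDom := S.adj_max y y hadj
    refine ⟨hmem, S.dense_dom.eq_of_inner_left ℂ fun x hx => ?_⟩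
    rw [S.adj_spec y hmem x hx, ← hadj x hx]

lemma mem_iff_forall_adjFun_eq_self [CompleteSpace H] (hS : IsTomitaOperator Hr S)
    (hclosed : IsClosed (Hr : Set H)) {x : H} :
    x ∈ Hr ↔ ∀ y ∈ S.adjDom, S.adjFun y = y → (⟪y, x⟫_ℂ).im = 0 :=
  ⟨fun hx _ hy hfix => (hS.adjFun_eq_self_iff.mp ⟨hy, hfix⟩) x hx,
    fun hx => Submodule.mem_of_forall_im_inner_eq_zero hclosed fun y hy =>
      hx y (hS.adjFun_eq_self_iff.mpr hy).1 (hS.adjFun_eq_self_iff.mpr hy).2⟩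

lemma inner_apply_tmul_toFun_eq_conj (hS : IsTomitaOperator Hr S) (τ : TensorSquare H K)
    (T : K →L[ℂ] K) {a b : H} {c d : K}
    (hreal : ∀ h ∈ Hr, ⟪c, T (τ.tmul h a)⟫_ℂ = conj ⟪d, T (τ.tmul h b)⟫_ℂ)
    {φ : H} (hφ : φ ∈ S.dom) :
    ⟪c, T (τ.tmul (S.toFun φ) a)⟫_ℂ = conj ⟪d, T (τ.tmul φ b)⟫_ℂ := by
  obtain ⟨h₁, hh₁, h₂, hh₂, rfl⟩ := (hS.mem_dom_iff φ).mp hφ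
  rw [hS.toFun_add_I_smul h₁ hh₁ h₂ hh₂, sub_eq_add_neg, ← neg_smul, τ.tmul_add_left,
    τ.tmul_add_left, τ.tmul_smul_left, τ.tmul_smul_left]
  simp only [map_add, map_smul, inner_add_right, inner_smul_right, hreal h₁ hh₁, hreal h₂ hh₂,
    map_mul, Complex.conj_I]

lemma forall_crossing_iff (hS : IsTomitaOperator Hr S) (τ : TensorSquare H K) (T : K →L[ℂ] K) :
    (∀ φ ∈ S.dom, ∀ w ∈ S.adjDom, ∀ a b : H,
        ⟪τ.tmul b (S.adjFun w), T (τ.tmul (S.toFun φ) a)⟫_ℂ =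
          conj ⟪τ.tmul a w, T (τ.tmul φ b)⟫_ℂ) ↔
      ∀ h ∈ Hr, ∀ y ∈ S.adjDom, S.adjFun y = y → ∀ a b : H,
        ⟪τ.tmul b y, T (τ.tmul h a)⟫_ℂ = conj ⟪τ.tmul a y, T (τ.tmul h b)⟫_ℂ := by
  refine ⟨fun hcross h hh y hy hfix a b => ?_, fun hreal φ hφ w hw a b => ?_⟩
  · simpa [hfix, hS.toFun_eq_self hh] using hcross h (hS.mem_dom hh) y hy a b
  · refine S.inner_tmul_adjFun_eq_conj τ (fun y hy hfix => ?_) hw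
    exact hS.inner_apply_tmul_toFun_eq_conj τ T (fun h hh => hreal h hh y hy hfix a b) hφ

lemma two_inv_smul_add_mem_iff [CompleteSpace H] (hS : IsTomitaOperator Hr S)
    (hclosed : IsClosed (Hr : Set H)) (τ : TensorSquare H K) {aL : H → (K →L[ℂ] H)}
    (haL : ∀ ψ u v : H, aL ψ (τ.tmul u v) = ⟪ψ, u⟫_ℂ • v) (T : K →L[ℂ] K) (ψ₁ ψ₂ h : H) :
    (2⁻¹ : ℂ) • (aL ψ₁ (T (τ.tmul h ψ₂)) + aL ψ₂ (T (τ.tmul h ψ₁))) ∈ Hr ↔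
      ∀ y ∈ S.adjDom, S.adjFun y = y →
        (⟪τ.tmul ψ₁ y, T (τ.tmul h ψ₂)⟫_ℂ + ⟪τ.tmul ψ₂ y, T (τ.tmul h ψ₁)⟫_ℂ).im = 0 := by
  simp [hS.mem_iff_forall_adjFun_eq_self hclosed, τ.inner_apply_eq_inner_tmul (haL _), ← mul_add]

end IsTomitaOperator

end

theorem crossing_symmetric_iff_endomorphisms_general
    [NormedAddCommGroup H] [InnerProductSpace ℂ H] [CompleteSpace H]
    [NormedAddCommGroup K] [InnerProductSpace ℂ K] [CompleteSpace K]
    (τ : TensorSquare H K)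
    -- the standard subspace
    (Hr : Submodule ℝ H) (hclosed : IsClosed (Hr : Set H))
    -- its Tomita operator
    (S : AntiInvolution H)
    (hSdom : ∀ x : H, x ∈ S.dom ↔ ∃ h₁ ∈ Hr, ∃ h₂ ∈ Hr, x = h₁ + Complex.I • h₂)
    (hSfun : ∀ h₁ ∈ Hr, ∀ h₂ ∈ Hr, S.toFun (h₁ + Complex.I • h₂) = h₁ - Complex.I • h₂)
    -- the left annihilation operators
    (aL : H → (K →L[ℂ] H)) (haL : ∀ ψ u v : H, aL ψ (τ.tmul u v) = ⟪ψ, u⟫_ℂ • v)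
    (T : K →L[ℂ] K) :
    CrossRelU τ S T (ContinuousLinearMap.adjoint T) ↔
      ∀ ψ₁ ψ₂ : H, ∀ h ∈ Hr,
        (2⁻¹ : ℂ) • (aL ψ₁ (T (τ.tmul h ψ₂)) + aL ψ₂ (T (τ.tmul h ψ₁))) ∈ Hr := by
  have hS : IsTomitaOperator Hr S := ⟨hSdom, hSfun⟩
  rw [crossRelU_adjoint_iff, hS.forall_crossing_iff]
  simp only [τ.inner_tmul_apply_eq_conj_iff, hS.two_inv_smul_add_mem_iff hclosed τ haL]
  exact ⟨fun hall a b h hh y hy hfix => hall h hh y hy hfix a b,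
    fun hall h hh y hy hfix a b => hall a b h hh y hy hfix⟩

/-- Let `Hr ⊂ 𝓗` be a standard subspace with Tomita operator `S` and let
`T` be `S`-crossable. Then `T` is `S`-crossing symmetric, `Cross_S(T) = T*`, iff for all
`ψ₁, ψ₂` the operator `V_{ψ₁,ψ₂}(T) = ½(a_L(ψ₁) T a_R*(ψ₂) + a_L(ψ₂) T a_R*(ψ₁))` maps
`Hr` into `Hr`. Here `a_L(ψ)(u ⊗ v) = ⟨ψ, u⟩ v` and `a_R*(ψ) ξ = ξ ⊗ ψ`. -/
theorem crossing_symmetric_iff_endomorphisms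
    [NormedAddCommGroup H] [InnerProductSpace ℂ H] [CompleteSpace H]
    [NormedAddCommGroup K] [InnerProductSpace ℂ K] [CompleteSpace K]
    (τ : TensorSquare H K)
    -- the standard subspace
    (Hr : Submodule ℝ H) (hclosed : IsClosed (Hr : Set H))
    (hsep : ∀ x ∈ Hr, ∀ y ∈ Hr, x = Complex.I • y → x = 0)
    (hdense : Dense {x : H | ∃ h₁ ∈ Hr, ∃ h₂ ∈ Hr, x = h₁ + Complex.I • h₂})
    -- its Tomita operator
    (S : AntiInvolution H)
    (hSdom : ∀ x : H, x ∈ S.dom ↔ ∃ h₁ ∈ Hr, ∃ h₂ ∈ Hr, x = h₁ + Complex.I • h₂)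
    (hSfun : ∀ h₁ ∈ Hr, ∀ h₂ ∈ Hr, S.toFun (h₁ + Complex.I • h₂) = h₁ - Complex.I • h₂)
    -- the left annihilation operators
    (aL : H → (K →L[ℂ] H)) (haL : ∀ ψ u v : H, aL ψ (τ.tmul u v) = ⟪ψ, u⟫_ℂ • v)
    (T : K →L[ℂ] K) (hcrossable : ∃ C : K →L[ℂ] K, CrossRelU τ S T C) :
    CrossRelU τ S T (ContinuousLinearMap.adjoint T) ↔
      ∀ ψ₁ ψ₂ : H, ∀ h ∈ Hr,
        (2⁻¹ : ℂ) • (aL ψ₁ (T (τ.tmul h ψ₂)) + aL ψ₂ (T (τ.tmul h ψ₁))) ∈ Hr :=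
  crossing_symmetric_iff_endomorphisms_general τ Hr hclosed S hSdom hSfun aL haL T
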